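/- arXiv:1907.08783 — 7 statements merged into one kernel-verified Lean document; each statement's English description precedes it below -/
import Mathlib

section
/- Let E be a Euclidean space with unit sphere S, let b be a symmetric bilinear form on E, and let u be the symmetric endomorphism of E with b(x,y) = ⟪x, u y⟫ for all x, y. If the function x ↦ b(x,x) on S has a local minimum at v ∈ S, then v is an eigenvector of u and its eigenvalue b(v,v) is the minimal eigenvalue of u. -/
open scoped RealInnerProductSpace

/-- A local minimum on the unit sphere of the quadratic form `x ↦ b x x`, where
`b x y = ⟪x, u y⟫` for a symmetric endomorphism `u`, is an eigenvector of `u`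
whose eigenvalue `b v v` is the minimal eigenvalue of `u`. -/
theorem stmt_0 {E : Type*} [NormedAddCommGroup E] [InnerProductSpace ℝ E]
    [FiniteDimensional ℝ E]
    (b : LinearMap.BilinForm ℝ E) (hbsymm : ∀ x y, b x y = b y x)
    (u : E →ₗ[ℝ] E) (hu : u.IsSymmetric)
    (hbu : ∀ x y, b x y = ⟪x, u y⟫)
    (v : E) (hv : ‖v‖ = 1)
    (hmin : IsLocalMinOn (fun x => b x x) {x : E | ‖x‖ = 1} v) :
    u v = b v v • v ∧ ∀ μ : ℝ, Module.End.HasEigenvalue u μ → b v v ≤ μ := by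
  set T : E →L[ℝ] E := LinearMap.toContinuousLinearMap u with hT
  have hTsa : IsSelfAdjoint T := ContinuousLinearMap.isSelfAdjoint_iff_isSymmetric.mpr hu
  have hre : T.reApplyInnerSelf = fun x => b x x := by
    funext x
    simp [ContinuousLinearMap.reApplyInnerSelf, hbu, hT, real_inner_comm]
  have hsphere : Metric.sphere (0 : E) ‖v‖ = {x : E | ‖x‖ = 1} := by
    ext x; simp [hv, dist_eq_norm]
  have hextr : IsLocalExtrOn T.reApplyInnerSelf (Metric.sphere (0 : E) ‖v‖) v := by
    rw [hre, hsphere]; exact Or.inl hmin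
  have hvne : v ≠ 0 := by intro h; rw [h] at hv; simp at hv
  have heig := hTsa.eq_smul_self_of_isLocalExtrOn_real hextr
  have hray : T.rayleighQuotient v = b v v := by
    rw [ContinuousLinearMap.rayleighQuotient, hre, hv]
    simp
  rw [hray] at heig
  have huv : u v = b v v • v := heig
  refine ⟨huv, ?_⟩
  intro μ hμ
  by_contra hlt
  push_neg at hlt
  set lam := b v v with hlam
  obtain ⟨w₀, hw₀⟩ := hμ.exists_hasEigenvector
  set w : E := ‖w₀‖⁻¹ • w₀ with hw
  have hw₀ne : w₀ ≠ 0 := hw₀.2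
  have hwnorm : ‖w‖ = 1 := by
    rw [hw, norm_smul, norm_inv, norm_norm, inv_mul_cancel₀ (norm_ne_zero_iff.mpr hw₀ne)]
  have huw : u w = μ • w := by
    rw [hw, map_smul, hw₀.apply_eq_smul, smul_comm]
  clear hw
  clear_value w
  -- orthogonality
  have hvw : ⟪v, w⟫ = 0 := by
    have h1 : lam * ⟪v, w⟫ = μ * ⟪v, w⟫ := by
      have h := hu v w
      rw [huv, huw, real_inner_smul_left, real_inner_smul_right] at h
      exact h
    have h2 : (lam - μ) * ⟪v, w⟫ = 0 := by linear_combination h1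
    rcases mul_eq_zero.mp h2 with h | h
    · exact absurd h (by intro hh; linarith)
    · exact h
  have hvv : ⟪v, v⟫ = 1 := by
    rw [real_inner_self_eq_norm_sq, hv]; norm_num
  have hww : ⟪w, w⟫ = 1 := by
    rw [real_inner_self_eq_norm_sq, hwnorm]; norm_num
  -- the curve
  set c : ℝ → E := fun t => Real.cos t • v + Real.sin t • w with hc
  have hcs : ∀ t, c t ∈ {x : E | ‖x‖ = 1} := by
    intro t
    have h1 : ⟪c t, c t⟫ = 1 := by
      simp only [hc, real_inner_add_add_self, real_inner_smul_left, real_inner_smul_right,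
        hvv, hww, hvw]
      linear_combination Real.sin_sq_add_cos_sq t
    have h2 : ‖c t‖ ^ 2 = 1 := by rw [← real_inner_self_eq_norm_sq, h1]
    have h4 : (‖c t‖ - 1) * (‖c t‖ + 1) = 0 := by nlinarith
    rcases mul_eq_zero.mp h4 with h | h
    · show ‖c t‖ = 1; linarith
    · show ‖c t‖ = 1; linarith [norm_nonneg (c t)]
  have hcont : Continuous c := by
    fun_prop
  have hc0 : c 0 = v := by simp [hc]
  have htend : Filter.Tendsto c (nhds 0) (nhdsWithin v {x : E | ‖x‖ = 1}) := by
    apply tendsto_nhdsWithin_of_tendsto_nhds_of_eventually_within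
    · rw [← hc0]; exact hcont.tendsto 0
    · exact Filter.Eventually.of_forall hcs
  have hval : ∀ t, b (c t) (c t) = lam + Real.sin t ^ 2 * (μ - lam) := by
    intro t
    have hbvw : b v w = 0 := by rw [hbu, huw, inner_smul_right, hvw]; ring
    have hbwv : b w v = 0 := by rw [hbsymm]; exact hbvw
    have hbww : b w w = μ := by rw [hbu, huw, inner_smul_right, hww]; ring
    simp only [hc, map_add, map_smul, LinearMap.add_apply, LinearMap.smul_apply,
      smul_eq_mul, hbvw, hbwv, hbww]
    linear_combination lam * (Real.sin_sq_add_cos_sq t)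
  have hev : ∀ᶠ t in nhds (0:ℝ), lam ≤ b (c t) (c t) := by
    have := htend.eventually hmin
    simpa [hc0] using this
  have hev2 : ∀ᶠ t in nhds (0:ℝ), Real.sin t = 0 := by
    filter_upwards [hev] with t ht
    rw [hval t] at ht
    by_contra hs
    have h1 : Real.sin t ^ 2 > 0 := by positivity
    nlinarith
  obtain ⟨ε, hε, hball⟩ := Metric.eventually_nhds_iff.mp hev2
  set t := min (ε/2) 1 with htdef
  have ht0 : 0 < t := by positivity
  have htπ : t < Real.pi := lt_of_le_of_lt (min_le_right _ _) (by linarith [Real.pi_gt_three])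
  have hsin : Real.sin t > 0 := Real.sin_pos_of_pos_of_lt_pi ht0 htπ
  have : Real.sin t = 0 := by
    apply hball
    rw [Real.dist_eq, sub_zero, abs_of_pos ht0]
    calc t ≤ ε/2 := min_le_left _ _
    _ < ε := by linarith
  linarith
end

section
/- Let a, b, c be real numbers with a ≥ 0 and c ≥ 0, and consider the quadratic form q(t₁,t₂) = a t₁² + 2 b t₁ t₂ + c t₂² on ℝ². Then q takes a negative value at some point (t₁,t₂) with t₁ ≥ 0, t₂ ≥ 0 and t₁² + t₂² = 1 if and only if b + √(a c) < 0. -/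
/-- Normalization: if the form is negative at a nonnegative point,
it is negative at a point of the unit circle in the first quadrant. -/
lemma aux_norm (a b c u₁ u₂ : ℝ) (h1 : 0 ≤ u₁) (h2 : 0 ≤ u₂)
    (hq : a * u₁ ^ 2 + 2 * b * u₁ * u₂ + c * u₂ ^ 2 < 0) :
    ∃ t₁ t₂ : ℝ, 0 ≤ t₁ ∧ 0 ≤ t₂ ∧ t₁ ^ 2 + t₂ ^ 2 = 1 ∧
      a * t₁ ^ 2 + 2 * b * t₁ * t₂ + c * t₂ ^ 2 < 0 := by
  have hn2 : 0 < u₁ ^ 2 + u₂ ^ 2 := by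
    rcases eq_or_lt_of_le h1 with h | h
    · rcases eq_or_lt_of_le h2 with h' | h'
      · exfalso; rw [← h, ← h'] at hq; nlinarith
      · positivity
    · positivity
  set n := Real.sqrt (u₁ ^ 2 + u₂ ^ 2) with hn
  have hnpos : 0 < n := Real.sqrt_pos.mpr hn2
  have hnsq : n ^ 2 = u₁ ^ 2 + u₂ ^ 2 := Real.sq_sqrt hn2.le
  refine ⟨u₁ / n, u₂ / n, by positivity, by positivity, ?_, ?_⟩
  · field_simp
    linarith [hnsq]
  · have : a * (u₁ / n) ^ 2 + 2 * b * (u₁ / n) * (u₂ / n) + c * (u₂ / n) ^ 2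
        = (a * u₁ ^ 2 + 2 * b * u₁ * u₂ + c * u₂ ^ 2) / n ^ 2 := by
      field_simp
    rw [this]
    exact div_neg_of_neg_of_pos hq (by positivity)

/-- Let `a c ≥ 0` and `q (t₁,t₂) = a t₁² + 2 b t₁ t₂ + c t₂²`.  Then `q` takes a
negative value on the part of the unit circle in the closed first quadrant if and
only if `b + √(a c) < 0`. -/
theorem stmt_2 (a b c : ℝ) (ha : 0 ≤ a) (hc : 0 ≤ c) :
    (∃ t₁ t₂ : ℝ, 0 ≤ t₁ ∧ 0 ≤ t₂ ∧ t₁ ^ 2 + t₂ ^ 2 = 1 ∧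
      a * t₁ ^ 2 + 2 * b * t₁ * t₂ + c * t₂ ^ 2 < 0) ↔
    b + Real.sqrt (a * c) < 0 := by
  have hsac : Real.sqrt (a * c) = Real.sqrt a * Real.sqrt c := Real.sqrt_mul ha c
  constructor
  · rintro ⟨t₁, t₂, h1, h2, hcirc, hq⟩
    have ht1 : 0 < t₁ := by
      rcases eq_or_lt_of_le h1 with h | h
      · exfalso; rw [← h] at hq; nlinarith [sq_nonneg t₂, mul_nonneg hc (sq_nonneg t₂)]
      · exact h
    have ht2 : 0 < t₂ := by
      rcases eq_or_lt_of_le h2 with h | h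
      · exfalso; rw [← h] at hq; nlinarith [mul_nonneg ha (sq_nonneg t₁)]
      · exact h
    have hsa : Real.sqrt a ^ 2 = a := Real.sq_sqrt ha
    have hsc : Real.sqrt c ^ 2 = c := Real.sq_sqrt hc
    rw [hsac]
    nlinarith [sq_nonneg (Real.sqrt a * t₁ - Real.sqrt c * t₂), mul_pos ht1 ht2]
  · intro hb
    have hs0 : 0 ≤ Real.sqrt (a * c) := Real.sqrt_nonneg _
    have hbneg : b < 0 := by linarith
    rcases eq_or_lt_of_le ha with ha0 | hapos
    · -- a = 0
      refine aux_norm a b c (c - b) (-b) (by linarith) (by linarith) ?_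
      nlinarith [sq_nonneg b, mul_pos (mul_pos (neg_pos.mpr hbneg) (neg_pos.mpr hbneg)) (show (0:ℝ) < c - 2*b by linarith)]
    rcases eq_or_lt_of_le hc with hc0 | hcpos
    · -- c = 0
      refine aux_norm a b c (-b) (a - b) (by linarith) (by linarith) ?_
      nlinarith [mul_pos (mul_pos (neg_pos.mpr hbneg) (neg_pos.mpr hbneg)) (show (0:ℝ) < a - 2*b by linarith)]
    · -- a, c > 0
      have hsa : Real.sqrt a ^ 2 = a := Real.sq_sqrt ha
      have hsc : Real.sqrt c ^ 2 = c := Real.sq_sqrt hc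
      have hsap : 0 < Real.sqrt a := Real.sqrt_pos.mpr hapos
      have hscp : 0 < Real.sqrt c := Real.sqrt_pos.mpr hcpos
      refine aux_norm a b c (Real.sqrt c) (Real.sqrt a) hscp.le hsap.le ?_
      have key : b + Real.sqrt a * Real.sqrt c < 0 := by rw [← hsac]; exact hb
      nlinarith [mul_pos hsap hscp]
end

section
/- Let k be a field of characteristic ≠ 2, (V,q) a finite-dimensional nondegenerate quadratic space over k, and γ ∈ SO(V,q)(k) an element whose characteristic polynomial Q satisfies Q(1)Q(−1) ≠ 0. Then the discriminant of q is represented by Q(1)Q(−1) in k^×/k^{×,2}. -/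
open Matrix

lemma skew_diag_zero {k : Type*} [Field k] (hchar : (2:k) ≠ 0) {n : ℕ}
    (S : Matrix (Fin n) (Fin n) k) (hS : Sᵀ = -S) (i : Fin n) : S i i = 0 := by
  have h := congrFun (congrFun hS i) i
  simp only [transpose_apply, Matrix.neg_apply] at h
  have : (2:k) * S i i = 0 := by ring_nf; linear_combination h
  rcases mul_eq_zero.mp this with h' | h'
  · exact absurd h' hchar
  · exact h'

lemma skew_det_sq {k : Type*} [Field k] (hchar : (2:k) ≠ 0) :
    ∀ n (S : Matrix (Fin n) (Fin n) k), Sᵀ = -S → ∃ c : k, S.det = c ^ 2 := by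
  intro n
  induction n using Nat.strong_induction_on with
  | _ n ih =>
    match n with
    | 0 => intro S hS; exact ⟨1, by simp [Matrix.det_fin_zero]⟩
    | 1 => intro S hS; exact ⟨0, by simp [Matrix.det_fin_one, skew_diag_zero hchar S hS]⟩
    | (m+2) =>
      intro S hS
      by_cases hd : S.det = 0
      · exact ⟨0, by simp [hd]⟩
      · -- find j with S 0 j ≠ 0
        obtain ⟨j, hj⟩ : ∃ j, S 0 j ≠ 0 := by
          by_contra h
          push_neg at h
          exact hd (Matrix.det_eq_zero_of_row_eq_zero 0 h)
        have hj0 : j ≠ 0 := by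
          rintro rfl; exact hj (skew_diag_zero hchar S hS 0)
        set σ : Equiv.Perm (Fin (m+2)) := Equiv.swap 1 j with hσ
        set S₁ := S.submatrix σ σ with hS₁def
        have hS₁ : S₁ᵀ = -S₁ := by
          ext a b
          simp only [hS₁def, transpose_apply, submatrix_apply, neg_apply]
          have := congrFun (congrFun hS (σ a)) (σ b)
          simpa using this
        have hσ0 : σ 0 = 0 := Equiv.swap_apply_of_ne_of_ne (by simp) (Ne.symm hj0)
        have hσ1 : σ 1 = j := Equiv.swap_apply_left 1 j
        have ha : S₁ 0 1 ≠ 0 := by simpa [hS₁def, hσ0, hσ1] using hj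
        have hdS₁ : S₁.det = S.det := Matrix.det_submatrix_equiv_self σ S
        -- reindex to Fin 2 ⊕ Fin m
        set e : Fin 2 ⊕ Fin m ≃ Fin (m+2) := finSumFinEquiv.trans (finCongr (by omega)) with he
        set T := S₁.submatrix e e with hTdef
        have hdT : T.det = S₁.det := Matrix.det_submatrix_equiv_self e S₁
        have hT : Tᵀ = -T := by
          ext a b
          simp only [hTdef, transpose_apply, submatrix_apply, neg_apply]
          have := congrFun (congrFun hS₁ (e a)) (e b)
          simpa using this
        have he0 : e (Sum.inl 0) = 0 := by
          apply Fin.ext; simp [he]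
        have he1 : e (Sum.inl 1) = 1 := by
          apply Fin.ext; simp [he]
        set A := T.toBlocks₁₁ with hA
        set B := T.toBlocks₁₂ with hB
        set C := T.toBlocks₂₁ with hC
        set D := T.toBlocks₂₂ with hD
        have hblocks : T = fromBlocks A B C D := (fromBlocks_toBlocks T).symm
        have hTt : fromBlocks Aᵀ Cᵀ Bᵀ Dᵀ = fromBlocks (-A) (-B) (-C) (-D) := by
          rw [← fromBlocks_transpose, ← hblocks, hT, hblocks, fromBlocks_neg]
        have hAt : Aᵀ = -A := by
          have := congrArg Matrix.toBlocks₁₁ hTt; simpa using this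
        have hBt : Cᵀ = -B := by
          have := congrArg Matrix.toBlocks₁₂ hTt; simpa using this
        have hCt : Bᵀ = -C := by
          have := congrArg Matrix.toBlocks₂₁ hTt; simpa using this
        have hDt : Dᵀ = -D := by
          have := congrArg Matrix.toBlocks₂₂ hTt; simpa using this
        have hA01 : A 0 1 = S₁ 0 1 := by
          simp [hA, Matrix.toBlocks₁₁, hTdef, he0, he1]
        have hA10 : A 1 0 = -S₁ 0 1 := by
          have := congrFun (congrFun hAt 0) 1
          simp only [transpose_apply, Matrix.neg_apply] at this
          rw [← hA01, ← this]
        have hA00 : A 0 0 = 0 := skew_diag_zero hchar A hAt 0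
        have hA11 : A 1 1 = 0 := skew_diag_zero hchar A hAt 1
        have hdetA : A.det = (S₁ 0 1) ^ 2 := by
          rw [Matrix.det_fin_two, hA00, hA11, hA01, hA10]; ring
        have hAunit : IsUnit A.det := by
          rw [hdetA]; exact (isUnit_iff_ne_zero.mpr (pow_ne_zero 2 ha))
        have : Invertible A := A.invertibleOfIsUnitDet hAunit
        have hschur : T.det = A.det * (D - C * A⁻¹ * B).det := by
          rw [hblocks, det_fromBlocks₁₁, invOf_eq_nonsing_inv]
        -- Schur complement is skew
        have hAinv : (A⁻¹)ᵀ = -(A⁻¹) := by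
          rw [Matrix.transpose_nonsing_inv, hAt]
          apply Matrix.inv_eq_right_inv
          rw [neg_mul_neg, Matrix.mul_nonsing_inv _ hAunit]
        have hskew' : (D - C * A⁻¹ * B)ᵀ = -(D - C * A⁻¹ * B) := by
          rw [transpose_sub, transpose_mul, transpose_mul, hDt, hAinv, hCt, hBt]
          simp only [Matrix.neg_mul, Matrix.mul_neg, neg_neg, neg_sub, Matrix.mul_assoc]
          abel
        obtain ⟨c, hc⟩ := ih m (by omega) (D - C * A⁻¹ * B) hskew'
        refine ⟨S₁ 0 1 * c, ?_⟩
        rw [← hdS₁, ← hdT, hschur, hdetA, hc]; ring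

lemma charpoly_eval' {k : Type*} [Field k] {n : ℕ} (M : Matrix (Fin n) (Fin n) k) (r : k) :
    M.charpoly.eval r = (Matrix.scalar (Fin n) r - M).det := by
  rw [Matrix.charpoly, _root_.eval_det, matPolyEquiv_charmatrix]
  simp

lemma matrix_neg_inv {k : Type*} [Field k] {n : ℕ} (A : Matrix (Fin n) (Fin n) k)
    (h : IsUnit A.det) : (-A)⁻¹ = -(A⁻¹) := by
  apply Matrix.inv_eq_right_inv
  rw [neg_mul_neg, Matrix.mul_nonsing_inv _ h]


/-- Let `k` be a field of characteristic `≠ 2`, `(V,Q)` a finite-dimensional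
nondegenerate quadratic space over `k`, and `γ` a special orthogonal transformation
of `(V,Q)` whose characteristic polynomial `χ` satisfies `χ(1)χ(−1) ≠ 0`.  Then the
discriminant of `Q` (the determinant of a Gram matrix of the polar bilinear form)
is represented by `χ(1)χ(−1)` in `k^×/(k^×)²`. -/
theorem stmt_6 {k : Type*} [Field k] (hchar : (2 : k) ≠ 0)
    {V : Type*} [AddCommGroup V] [Module k V] [FiniteDimensional k V]
    {n : ℕ} (bV : Module.Basis (Fin n) k V)
    (Q : QuadraticForm k V)
    (hnd : (QuadraticMap.polarBilin Q).Nondegenerate)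
    (γ : V →ₗ[k] V) (hisom : ∀ x, Q (γ x) = Q x)
    (hdet : LinearMap.det γ = 1)
    (hQ1 : (LinearMap.charpoly γ).eval 1 * (LinearMap.charpoly γ).eval (-1) ≠ 0) :
    ∃ c : k, c ≠ 0 ∧
      (BilinForm.toMatrix bV (QuadraticMap.polarBilin Q)).det
        = c ^ 2 * ((LinearMap.charpoly γ).eval 1 * (LinearMap.charpoly γ).eval (-1)) := by
  classical
  set G := BilinForm.toMatrix bV (QuadraticMap.polarBilin Q) with hGdef
  set M := LinearMap.toMatrix bV bV γ with hMdef
  have hchi : LinearMap.charpoly γ = M.charpoly := (LinearMap.charpoly_toMatrix γ bV).symm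
  have hev1 : (LinearMap.charpoly γ).eval 1 = (1 - M).det := by
    rw [hchi, charpoly_eval', _root_.map_one]
  have hevm1 : (LinearMap.charpoly γ).eval (-1) = (-1)^n * (1 + M).det := by
    rw [hchi, charpoly_eval', map_neg, _root_.map_one]
    have h : (-1 : Matrix (Fin n) (Fin n) k) - M = -(1 + M) := by noncomm_ring
    rw [h, Matrix.det_neg]
    simp
  have h1M : (1 - M).det ≠ 0 := by
    intro h; apply hQ1; rw [hev1, h, zero_mul]
  have h1pM : (1 + M).det ≠ 0 := by
    intro h; apply hQ1; rw [hevm1, h, mul_zero, mul_zero]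
  have h1pMunit : IsUnit (1 + M).det := isUnit_iff_ne_zero.mpr h1pM
  have hGdet : G.det ≠ 0 := by
    rw [hGdef]
    exact (LinearMap.BilinForm.nondegenerate_iff_det_ne_zero bV).mp (LinearMap.BilinForm.Nondegenerate.ofSeparatingLeft hnd.1)
  have hGsymm : Gᵀ = G := by
    ext i j
    erw [Matrix.transpose_apply, hGdef, BilinForm.toMatrix_apply, BilinForm.toMatrix_apply]
    simp only [QuadraticMap.polarBilin_apply_apply]
    exact QuadraticMap.polar_comm Q (bV j) (bV i)
  have horth : Mᵀ * G * M = G := by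
    have hcomp : LinearMap.BilinForm.comp (QuadraticMap.polarBilin Q) γ γ
        = QuadraticMap.polarBilin Q := by
      ext x y
      simp only [LinearMap.BilinForm.comp_apply, QuadraticMap.polarBilin_apply_apply,
        QuadraticMap.polar, ← map_add, hisom]
    calc Mᵀ * G * M
        = BilinForm.toMatrix bV (LinearMap.BilinForm.comp (QuadraticMap.polarBilin Q) γ γ) := by
          erw [BilinForm.toMatrix_comp bV bV _ γ γ, ← hMdef, ← hGdef]
      _ = G := by rw [hcomp, hGdef]
  -- Cayley-type transform
  set S := G * (1 - M) * (1 + M)⁻¹ with hSdef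
  -- key identity, inverse-free
  have hsum : (1 - M)ᵀ * G * (1 + M) + (1 + M)ᵀ * G * (1 - M)
      = (G - Mᵀ * G * M) + (G - Mᵀ * G * M) := by
    rw [Matrix.transpose_sub, Matrix.transpose_add, Matrix.transpose_one]
    noncomm_ring
  rw [horth, sub_self, add_zero] at hsum
  have hkey : (1 - M)ᵀ * G * (1 + M) = -((1 + M)ᵀ * G * (1 - M)) :=
    eq_neg_of_add_eq_zero_left hsum
  have hkey2 : (1 - M)ᵀ * G = -((1 + M)ᵀ * (G * (1 - M) * (1 + M)⁻¹)) := by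
    have h := congrArg (fun X => X * (1 + M)⁻¹) hkey
    rw [Matrix.mul_nonsing_inv_cancel_right _ _ h1pMunit] at h
    simpa only [Matrix.neg_mul, Matrix.mul_assoc] using h
  have hSkew : Sᵀ = -S := by
    have hTunit : IsUnit ((1 + M)ᵀ).det := by rwa [Matrix.det_transpose]
    rw [hSdef, Matrix.transpose_mul, Matrix.transpose_mul, Matrix.transpose_nonsing_inv,
      hGsymm, Matrix.mul_assoc, hkey2, Matrix.mul_neg, ← Matrix.mul_assoc,
      Matrix.nonsing_inv_mul _ hTunit, Matrix.one_mul, Matrix.mul_assoc]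
  obtain ⟨c₀, hc₀⟩ := skew_det_sq hchar n S hSkew
  have hSdet : S.det = G.det * (1 - M).det * ((1 + M).det)⁻¹ := by
    rw [hSdef, Matrix.det_mul, Matrix.det_mul, Matrix.det_nonsing_inv, Ring.inverse_eq_inv']
  have hSne : S.det ≠ 0 := by
    rw [hSdet]
    exact mul_ne_zero (mul_ne_zero hGdet h1M) (inv_ne_zero h1pM)
  have hc₀ne : c₀ ≠ 0 := by
    intro h; apply hSne; rw [hc₀, h]; ring
  have hneven : ((-1 : k)) ^ n = 1 := by
    have h1 : S.det = (-1)^n * S.det := by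
      conv_lhs => rw [← Matrix.det_transpose S, hSkew, Matrix.det_neg]
      simp
    have h2 : ((-1 : k)^n - 1) * S.det = 0 := by linear_combination -h1
    rcases mul_eq_zero.mp h2 with h | h
    · exact sub_eq_zero.mp h
    · exact absurd h hSne
  refine ⟨c₀ / (1 - M).det, div_ne_zero hc₀ne h1M, ?_⟩
  rw [hev1, hevm1, hneven]
  have hfin : G.det * (1 - M).det * ((1 + M).det)⁻¹ = c₀ ^ 2 := by rw [← hSdet, hc₀]
  field_simp
  field_simp at hfin
  linear_combination hfin
end

section
/- Let g(x) be twice the convolution square of x ↦ cos(πx)·1_{|x|≤1/2}, and let h(α) = ∫_0^∞ g(x) e^{−αx} dx for α ∈ ℂ with α ∉ {iπ, −iπ}. Then h(α) = α/(α² + π²) + 2π² (1 + e^{−α})/((α² + π²)²). -/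
open MeasureTheory

/-- `f x = cos (π x)` for `|x| ≤ 1/2`, and `0` otherwise. -/
noncomputable def oddF (x : ℝ) : ℝ := if |x| ≤ 1 / 2 then Real.cos (Real.pi * x) else 0

/-- `g` is twice the convolution square of `oddF`. -/
noncomputable def oddG (x : ℝ) : ℝ := 2 * ∫ t : ℝ, oddF t * oddF (x - t)

open Real in
lemma oddG_zero' {x : ℝ} (hx : 1 < x) : oddG x = 0 := by
  unfold oddG
  have : ∀ t : ℝ, oddF t * oddF (x - t) = 0 := by
    intro t
    unfold oddF
    split_ifs with h1 h2 h2
    · exfalso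
      have h1' := abs_le.1 h1
      have h2' := abs_le.1 h2
      linarith [h1'.2, h2'.2]
    all_goals ring
  simp [this]

open Real in
lemma oddG_eq' {x : ℝ} (hx0 : 0 ≤ x) (hx1 : x ≤ 1) :
    oddG x = (1 - x) * Real.cos (π * x) + Real.sin (π * x) / π := by
  unfold oddG
  have hle : x - 1/2 ≤ 1/2 := by linarith
  have key : (fun t : ℝ => oddF t * oddF (x - t))
      = Set.indicator (Set.Icc (x - 1/2) (1/2))
          (fun t => Real.cos (π * t) * Real.cos (π * (x - t))) := by
    funext t
    by_cases ht : t ∈ Set.Icc (x - 1/2) (1/2)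
    · rw [Set.indicator_of_mem ht]
      obtain ⟨ht1, ht2⟩ := ht
      unfold oddF
      rw [if_pos (abs_le.2 ⟨by linarith, by linarith⟩),
        if_pos (abs_le.2 ⟨by linarith, by linarith⟩)]
    · rw [Set.indicator_of_notMem ht]
      rw [Set.mem_Icc, not_and_or] at ht
      unfold oddF
      rcases ht with ht | ht
      · push_neg at ht
        have : ¬ |x - t| ≤ 1/2 := by
          intro h; have := (abs_le.1 h).2; linarith
        rw [if_neg this, mul_zero]
      · push_neg at ht
        have : ¬ |t| ≤ 1/2 := by
          intro h; have := (abs_le.1 h).2; linarith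
        rw [if_neg this, zero_mul]
  rw [key, integral_indicator measurableSet_Icc, integral_Icc_eq_integral_Ioc,
    ← intervalIntegral.integral_of_le hle]
  have hπ := Real.pi_ne_zero
  have deriv : ∀ t ∈ Set.uIcc (x - 1/2) (1/2),
      HasDerivAt (fun t : ℝ => Real.sin (π * (2 * t - x)) / (4 * π) + t * Real.cos (π * x) / 2)
        (Real.cos (π * t) * Real.cos (π * (x - t))) t := by
    intro t _
    have h1 : HasDerivAt (fun t : ℝ => π * (2 * t - x)) (π * 2) t := by
      simpa using (((hasDerivAt_id t).const_mul 2).sub_const x).const_mul π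
    have h2 := (h1.sin).div_const (4 * π)
    have h3 := ((hasDerivAt_id t).mul_const (Real.cos (π * x))).div_const 2
    have h4 := h2.add h3
    convert h4 using 1
    case e'_4 => rfl
    case e'_5 => rfl
    case e'_8 => rfl
    have ha : Real.cos (π * x)
        = Real.cos (π * t) * Real.cos (π * (x - t)) - Real.sin (π * t) * Real.sin (π * (x - t)) := by
      rw [show π * x = π * t + π * (x - t) by ring, Real.cos_add]
    have hb : Real.cos (π * (2 * t - x))
        = Real.cos (π * t) * Real.cos (π * (x - t)) + Real.sin (π * t) * Real.sin (π * (x - t)) := by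
      rw [show π * (2 * t - x) = π * t - π * (x - t) by ring, Real.cos_sub]
    rw [hb, ha]
    field_simp
    ring
  rw [intervalIntegral.integral_eq_sub_of_hasDerivAt deriv (by
    apply Continuous.intervalIntegrable
    exact (Real.continuous_cos.comp (continuous_const.mul continuous_id)).mul
      (Real.continuous_cos.comp (continuous_const.mul (continuous_const.sub continuous_id))))]
  have e1 : π * (2 * (1/2 : ℝ) - x) = π - π * x := by ring
  have e2 : π * (2 * (x - 1/2) - x) = -(π - π * x) := by ring
  rw [e1, e2, Real.sin_neg, Real.sin_pi_sub]
  field_simp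
  ring

open Real in
set_option maxHeartbeats 1600000 in
lemma laplace_eq' (α : ℂ) (hQ : α ^ 2 + (π : ℂ) ^ 2 ≠ 0) :
    ∫ x in (0:ℝ)..1, (((1 - x) * Real.cos (π * x) + Real.sin (π * x) / π : ℝ) : ℂ)
        * Complex.exp (-α * (x : ℂ))
      = α / (α ^ 2 + (π : ℂ) ^ 2)
        + 2 * (π : ℂ) ^ 2 * (1 + Complex.exp (-α)) / ((α ^ 2 + (π : ℂ) ^ 2) ^ 2) := by
  have hπ : ((π : ℂ)) ≠ 0 := by exact_mod_cast Real.pi_ne_zero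
  set A : ℂ := (π:ℂ) * ((α ^ 2 - (π:ℂ) ^ 2) - (1 + α) * (α ^ 2 + (π:ℂ) ^ 2)) with hA
  set B : ℂ := (π:ℂ) * α * (α ^ 2 + (π:ℂ) ^ 2) with hB
  set C : ℂ := -2 * α * (π:ℂ) ^ 2 + ((π:ℂ) ^ 2 - α) * (α ^ 2 + (π:ℂ) ^ 2) with hC
  set D : ℂ := -(π:ℂ) ^ 2 * (α ^ 2 + (π:ℂ) ^ 2) with hD
  set N : ℂ := (π:ℂ) * (α ^ 2 + (π:ℂ) ^ 2) ^ 2 with hN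
  have hN0 : N ≠ 0 := mul_ne_zero hπ (pow_ne_zero 2 hQ)
  set G : ℝ → ℂ := fun x => Complex.exp (-α * x) *
    ((A + B * x) * Complex.cos ((π:ℂ) * x) + (C + D * x) * Complex.sin ((π:ℂ) * x)) / N with hG
  have deriv : ∀ x ∈ Set.uIcc (0:ℝ) 1,
      HasDerivAt G ((((1 - x) * Real.cos (π * x) + Real.sin (π * x) / π : ℝ) : ℂ)
        * Complex.exp (-α * (x : ℂ))) x := by
    intro x _
    have hGC : ∀ z : ℂ, HasDerivAt (fun z : ℂ => Complex.exp (-α * z) *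
        ((A + B * z) * Complex.cos ((π:ℂ) * z) + (C + D * z) * Complex.sin ((π:ℂ) * z)) / N)
        ((Complex.exp (-α * z) * (-α) * ((A + B * z) * Complex.cos ((π:ℂ) * z)
            + (C + D * z) * Complex.sin ((π:ℂ) * z))
          + Complex.exp (-α * z) * (B * Complex.cos ((π:ℂ) * z)
            + (A + B * z) * (-Complex.sin ((π:ℂ) * z) * (π:ℂ))
            + D * Complex.sin ((π:ℂ) * z)
            + (C + D * z) * (Complex.cos ((π:ℂ) * z) * (π:ℂ)))) / N) z := by
      intro z
      have he : HasDerivAt (fun z : ℂ => Complex.exp (-α * z))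
          (Complex.exp (-α * z) * (-α)) z := by
        simpa using ((hasDerivAt_id z).const_mul (-α)).cexp
      have hc : HasDerivAt (fun z : ℂ => Complex.cos ((π:ℂ) * z))
          (-Complex.sin ((π:ℂ) * z) * (π:ℂ)) z := by
        simpa using ((hasDerivAt_id z).const_mul ((π:ℂ))).ccos
      have hs : HasDerivAt (fun z : ℂ => Complex.sin ((π:ℂ) * z))
          (Complex.cos ((π:ℂ) * z) * (π:ℂ)) z := by
        simpa using ((hasDerivAt_id z).const_mul ((π:ℂ))).csin
      have hlin1 : HasDerivAt (fun z : ℂ => A + B * z) B z := by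
        simpa using ((hasDerivAt_id z).const_mul B).const_add A
      have hlin2 : HasDerivAt (fun z : ℂ => C + D * z) D z := by
        simpa using ((hasDerivAt_id z).const_mul D).const_add C
      have hin := (hlin1.mul hc).add (hlin2.mul hs)
      have := (he.mul hin).div_const N
      convert this using 2
      case e'_4 => rfl
      case e'_5 => rfl
      case e'_8 => rfl
      simp only [Pi.add_apply, Pi.mul_apply]
      ring
    have h5 := (hGC x).comp_ofReal
    convert h5 using 1
    rw [eq_div_iff hN0]
    simp only [Complex.ofReal_add, Complex.ofReal_mul, Complex.ofReal_div, Complex.ofReal_sub,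
      Complex.ofReal_one, Complex.ofReal_cos, Complex.ofReal_sin]
    rw [hA, hB, hC, hD, hN]
    field_simp
    ring
  rw [intervalIntegral.integral_eq_sub_of_hasDerivAt deriv (by
    apply Continuous.intervalIntegrable
    apply Continuous.mul
    · exact Complex.continuous_ofReal.comp (by fun_prop)
    · exact Complex.continuous_exp.comp (by fun_prop))]
  simp only [hG]
  push_cast
  simp only [mul_one, mul_zero, add_zero, Complex.cos_pi, Complex.sin_pi,
    Complex.cos_zero, Complex.sin_zero, Complex.exp_zero]
  rw [hN]
  field_simp
  ring

/-- For `α ∈ ℂ` with `α ≠ ±iπ`, the one-sided Laplace transform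
`h(α) = ∫_0^∞ g(x) e^{−αx} dx` equals `α/(α²+π²) + 2π²(1+e^{−α})/((α²+π²)²)`. -/
theorem stmt_11 (α : ℂ) (h1 : α ≠ (Real.pi : ℂ) * Complex.I)
    (h2 : α ≠ -(Real.pi : ℂ) * Complex.I) :
    ∫ x in Set.Ioi (0 : ℝ), (oddG x : ℂ) * Complex.exp (-α * (x : ℂ))
      = α / (α ^ 2 + (Real.pi : ℂ) ^ 2)
        + 2 * (Real.pi : ℂ) ^ 2 * (1 + Complex.exp (-α))
          / ((α ^ 2 + (Real.pi : ℂ) ^ 2) ^ 2) := by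
  have hQ : α ^ 2 + (Real.pi : ℂ) ^ 2 ≠ 0 := by
    have e : α ^ 2 + (Real.pi : ℂ) ^ 2
        = (α - (Real.pi : ℂ) * Complex.I) * (α + (Real.pi : ℂ) * Complex.I) := by
      have hI : Complex.I ^ 2 = -1 := Complex.I_sq
      ring_nf
      rw [hI]
      ring
    rw [e]
    refine mul_ne_zero (sub_ne_zero.2 h1) ?_
    intro h
    exact h2 (by linear_combination h)
  have step1 : ∫ x in Set.Ioi (0 : ℝ), (oddG x : ℂ) * Complex.exp (-α * (x : ℂ))
      = ∫ x in Set.Ioi (0 : ℝ),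
          Set.indicator (Set.Ioc (0:ℝ) 1)
            (fun x : ℝ => (oddG x : ℂ) * Complex.exp (-α * (x : ℂ))) x := by
    apply setIntegral_congr_fun measurableSet_Ioi
    intro x hx
    by_cases hx1 : x ≤ 1
    · rw [Set.indicator_of_mem (Set.mem_Ioc.2 ⟨hx, hx1⟩)]
    · push_neg at hx1
      rw [Set.indicator_of_notMem (by simp [Set.mem_Ioc]; intro _; linarith)]
      simp only [oddG_zero' hx1, Complex.ofReal_zero, zero_mul]
  rw [step1, setIntegral_indicator measurableSet_Ioc,
    show Set.Ioi (0:ℝ) ∩ Set.Ioc 0 1 = Set.Ioc 0 1 by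
      ext y; simp [Set.mem_Ioc],
    ← intervalIntegral.integral_of_le (by norm_num : (0:ℝ) ≤ 1)]
  rw [intervalIntegral.integral_congr (g := fun x : ℝ =>
      (((1 - x) * Real.cos (Real.pi * x) + Real.sin (Real.pi * x) / Real.pi : ℝ) : ℂ)
        * Complex.exp (-α * (x : ℂ))) (by
    intro x hx
    rw [Set.uIcc_of_le (by norm_num : (0:ℝ) ≤ 1), Set.mem_Icc] at hx
    simp only [oddG_eq' hx.1 hx.2])]
  exact laplace_eq' α hQ
end

section
/- Let g be twice the convolution square of x ↦ cos(πx)·1_{|x|≤1/2} and for ℓ > 0 set G_ℓ(x) = g(x/ℓ). Then the Fourier transform of G_ℓ satisfies Ĝ_ℓ(0) = 8ℓ/π² and Ĝ_ℓ(i/(4π)) = 4π²ℓ (1 + cosh(ℓ/2)) / ((ℓ²/4 + π²)²). -/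
open MeasureTheory

section aux
open Real

lemma oddF_continuous : Continuous oddF := by
  unfold oddF
  apply Continuous.if ?_ (by continuity) continuous_const
  have hset : {x : ℝ | |x| ≤ 1 / 2} = Set.Icc (-(1/2 : ℝ)) (1/2) := by
    ext x; simp [abs_le]
  intro a ha
  rw [hset, frontier_Icc (by norm_num)] at ha
  simp only [Set.mem_insert_iff, Set.mem_singleton_iff] at ha
  rcases ha with h | h <;> subst h
  · rw [show π * -(1/2 : ℝ) = -(π/2) by ring, Real.cos_neg, Real.cos_pi_div_two]
  · rw [show π * (1/2 : ℝ) = π/2 by ring, Real.cos_pi_div_two]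

lemma oddF_compactSupport : HasCompactSupport oddF := by
  apply HasCompactSupport.intro (isCompact_Icc (a := -(1/2 : ℝ)) (b := 1/2))
  intro x hx
  refine if_neg fun h' => hx ?_
  rw [abs_le] at h'
  exact Set.mem_Icc.mpr h'

lemma fe_integrable (b : ℝ) : Integrable (fun t => oddF t * Real.exp (b * t)) := by
  apply Continuous.integrable_of_hasCompactSupport
  · exact oddF_continuous.mul (by continuity)
  · exact oddF_compactSupport.mul_right

noncomputable def Jv (b : ℝ) : ℝ := π * (Real.exp (b/2) + Real.exp (-b/2)) / (b^2 + π^2)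

lemma integral_fe (b : ℝ) : ∫ t : ℝ, oddF t * Real.exp (b * t) = Jv b := by
  have hden : b^2 + π^2 ≠ 0 := by positivity
  have h1 : (fun t => oddF t * Real.exp (b * t))
      = Set.indicator (Set.Icc (-(1/2 : ℝ)) (1/2)) (fun t => Real.cos (π * t) * Real.exp (b * t)) := by
    funext t
    by_cases h : |t| ≤ 1/2
    · rw [Set.indicator_of_mem (by rwa [Set.mem_Icc, ← abs_le]), oddF, if_pos h]
    · rw [Set.indicator_of_notMem (by rwa [Set.mem_Icc, ← abs_le]), oddF, if_neg h, zero_mul]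
  rw [h1, integral_indicator measurableSet_Icc, integral_Icc_eq_integral_Ioc,
    ← intervalIntegral.integral_of_le (by norm_num)]
  have hderiv : ∀ t ∈ Set.uIcc (-(1/2 : ℝ)) (1/2),
      HasDerivAt (fun t => Real.exp (b*t) * (b * Real.cos (π*t) + π * Real.sin (π*t)) / (b^2 + π^2))
        (Real.cos (π * t) * Real.exp (b * t)) t := by
    intro t _
    have he : HasDerivAt (fun t : ℝ => Real.exp (b*t)) (Real.exp (b*t) * b) t :=
      ((hasDerivAt_id t).const_mul b).exp.congr_deriv (by simp)
    have hc : HasDerivAt (fun t : ℝ => Real.cos (π*t)) (-Real.sin (π*t) * π) t :=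
      ((hasDerivAt_id t).const_mul π).cos.congr_deriv (by simp)
    have hs : HasDerivAt (fun t : ℝ => Real.sin (π*t)) (Real.cos (π*t) * π) t :=
      ((hasDerivAt_id t).const_mul π).sin.congr_deriv (by simp)
    have := (he.mul ((hc.const_mul b).add (hs.const_mul π))).div_const (b^2 + π^2)
    refine this.congr_deriv ?_
    rw [div_eq_iff hden]
    simp only [Pi.add_apply]
    ring
  rw [intervalIntegral.integral_eq_sub_of_hasDerivAt hderiv
      ((Continuous.mul (by continuity) (by continuity)).intervalIntegrable _ _)]
  rw [show π * (1/2 : ℝ) = π/2 by ring, show π * -(1/2 : ℝ) = -(π/2) by ring]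
  rw [Real.cos_pi_div_two, Real.sin_pi_div_two, Real.cos_neg, Real.sin_neg,
    Real.cos_pi_div_two, Real.sin_pi_div_two]
  unfold Jv
  field_simp
  ring

lemma main_integral (ℓ : ℝ) (hℓ : 0 < ℓ) (a : ℝ) :
    ∫ x : ℝ, oddG (x / ℓ) * Real.exp (a * x) = 2 * ℓ * (Jv (a * ℓ))^2 := by
  set b := a * ℓ with hb
  have hℓ0 : ℓ ≠ 0 := ne_of_gt hℓ
  have hstep1 : (fun x : ℝ => oddG (x / ℓ) * Real.exp (a * x))
      = fun x => (fun u => oddG u * Real.exp (b * u)) (x / ℓ) := by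
    funext x
    simp only
    congr 2
    field_simp
    ring
  rw [hstep1, MeasureTheory.Measure.integral_comp_div (fun u => oddG u * Real.exp (b * u)) ℓ]
  have hconv : ∀ u : ℝ, oddG u * Real.exp (b * u)
      = 2 * (MeasureTheory.convolution (fun t => oddF t * Real.exp (b * t))
          (fun t => oddF t * Real.exp (b * t)) (ContinuousLinearMap.mul ℝ ℝ) volume u) := by
    intro u
    rw [MeasureTheory.convolution_def]
    simp only [ContinuousLinearMap.mul_apply']
    have : ∀ t : ℝ, (oddF t * Real.exp (b * t)) * (oddF (u - t) * Real.exp (b * (u - t)))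
        = (oddF t * oddF (u - t)) * Real.exp (b * u) := by
      intro t
      rw [show (oddF t * Real.exp (b * t)) * (oddF (u - t) * Real.exp (b * (u - t)))
          = (oddF t * oddF (u - t)) * (Real.exp (b*t) * Real.exp (b*(u-t))) by ring,
        ← Real.exp_add]
      ring_nf
    simp_rw [this, integral_mul_const]
    rw [oddG]
    ring
  simp_rw [hconv]
  rw [integral_const_mul,
    MeasureTheory.integral_convolution (ContinuousLinearMap.mul ℝ ℝ) (fe_integrable b) (fe_integrable b)]
  rw [ContinuousLinearMap.mul_apply', integral_fe]
  rw [abs_of_pos hℓ, smul_eq_mul]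
  ring

end aux

/-- The Fourier transform `F̂(ξ) = ∫_ℝ F(x) e^{−2iπxξ} dx`, extended to complex `ξ`. -/
noncomputable def fourierC (F : ℝ → ℝ) (ξ : ℂ) : ℂ :=
  ∫ x : ℝ, (F x : ℂ) * Complex.exp (-2 * (Real.pi : ℂ) * Complex.I * (x : ℂ) * ξ)

/-- For `ℓ > 0` and `G_ℓ(x) = g(x/ℓ)` one has `Ĝ_ℓ(0) = 8ℓ/π²` and
`Ĝ_ℓ(i/(4π)) = 4π²ℓ(1 + cosh(ℓ/2))/((ℓ²/4 + π²)²)`. -/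
theorem stmt_12 (ℓ : ℝ) (hℓ : 0 < ℓ) :
    fourierC (fun x => oddG (x / ℓ)) 0 = ((8 * ℓ / Real.pi ^ 2 : ℝ) : ℂ) ∧
    fourierC (fun x => oddG (x / ℓ)) (Complex.I / (4 * (Real.pi : ℂ)))
      = ((4 * Real.pi ^ 2 * ℓ * (1 + Real.cosh (ℓ / 2))
          / ((ℓ ^ 2 / 4 + Real.pi ^ 2) ^ 2) : ℝ) : ℂ) := by
  have hπ : Real.pi ≠ 0 := Real.pi_ne_zero
  constructor
  · unfold fourierC
    simp only [mul_zero, Complex.exp_zero, mul_one]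
    have hre : ∫ x : ℝ, oddG (x / ℓ) = 8 * ℓ / Real.pi ^ 2 := by
      have := main_integral ℓ hℓ 0
      simp only [zero_mul, Real.exp_zero, mul_one] at this
      rw [this]
      unfold Jv
      norm_num [Real.exp_zero]
      field_simp
      ring
    calc ∫ x : ℝ, ((oddG (x / ℓ) : ℝ) : ℂ) = ((∫ x : ℝ, oddG (x / ℓ) : ℝ) : ℂ) :=
          integral_ofReal (𝕜 := ℂ)
      _ = _ := by rw [hre]
  · unfold fourierC
    have harg : ∀ x : ℝ, -2 * (Real.pi : ℂ) * Complex.I * (x : ℂ) * (Complex.I / (4 * (Real.pi : ℂ)))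
        = ((x / 2 : ℝ) : ℂ) := by
      intro x
      have hπc : (Real.pi : ℂ) ≠ 0 := by exact_mod_cast hπ
      push_cast
      field_simp
      rw [Complex.I_sq]
      ring
    simp_rw [harg, ← Complex.ofReal_exp, ← Complex.ofReal_mul]
    refine (integral_ofReal (𝕜 := ℂ)).trans ?_
    congr 1
    show (∫ x : ℝ, oddG (x / ℓ) * Real.exp (x / 2))
        = 4 * Real.pi ^ 2 * ℓ * (1 + Real.cosh (ℓ / 2)) / (ℓ ^ 2 / 4 + Real.pi ^ 2) ^ 2
    have := main_integral ℓ hℓ (1/2)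
    simp_rw [show ∀ x : ℝ, (1/2 : ℝ) * x = x / 2 by intro x; ring] at this
    rw [this]
    unfold Jv
    have h1 : Real.exp (ℓ / 2 / 2) = Real.exp (ℓ/4) := by rw [show ℓ/2/2 = ℓ/4 by ring]
    have h2 : Real.exp (-(ℓ / 2) / 2) = Real.exp (-(ℓ/4)) := by rw [show -(ℓ/2)/2 = -(ℓ/4) by ring]
    have hE : Real.exp (ℓ/4) * Real.exp (ℓ/4) = Real.exp (ℓ/2) := by
      rw [← Real.exp_add, show ℓ/4 + ℓ/4 = ℓ/2 by ring]
    have hF : Real.exp (-(ℓ/4)) * Real.exp (-(ℓ/4)) = Real.exp (-(ℓ/2)) := by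
      rw [← Real.exp_add, show -(ℓ/4) + -(ℓ/4) = -(ℓ/2) by ring]
    have hEF : Real.exp (ℓ/4) * Real.exp (-(ℓ/4)) = 1 := by
      rw [← Real.exp_add, show ℓ/4 + -(ℓ/4) = (0:ℝ) by ring, Real.exp_zero]
    have hnum : 2 * ℓ * (Real.pi * (Real.exp (ℓ/4) + Real.exp (-(ℓ/4))))^2
        = 4 * Real.pi^2 * ℓ * (1 + (Real.exp (ℓ/2) + Real.exp (-(ℓ/2)))/2) := by
      linear_combination (2*ℓ*Real.pi^2) * hE + (2*ℓ*Real.pi^2) * hF + (4*ℓ*Real.pi^2) * hEF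
    rw [Real.cosh_eq, h1, h2, show (ℓ/2)^2 + Real.pi^2 = ℓ^2/4 + Real.pi^2 by ring]
    rw [show 2 * ℓ * (Real.pi * (Real.exp (ℓ/4) + Real.exp (-(ℓ/4))) / (ℓ^2/4 + Real.pi^2))^2
         = 2 * ℓ * (Real.pi * (Real.exp (ℓ/4) + Real.exp (-(ℓ/4))))^2 / (ℓ^2/4 + Real.pi^2)^2 from by
           rw [div_pow]; ring, hnum]
end

section
/- Let r ≥ 1, let β be a symmetric bilinear form on ℝ^r, and let D = {t ∈ ℝ^r | ∑ t_i² = 1, t_i ≥ 0 ∀i}. For each nonempty I ⊆ {1,…,r}, let λ_I denote the minimal eigenvalue of the Gram matrix (β(e_i,e_j))_{i,j ∈ I}, and let 𝓘 be the set of nonempty I such that the λ_I-eigenspace of this Gram matrix contains a vector with all coordinates (indexed by I) strictly positive. Then 𝓘 is nonempty and min_{t ∈ D} β(t,t) = min_{I ∈ 𝓘} λ_I. -/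
open Matrix Finset

private lemma aux_lim_16 (a C e0 : ℝ) (he : 0 < e0)
    (h : ∀ θ : ℝ, 0 < θ → θ < e0 → θ * C ≤ a) : 0 ≤ a := by
  have ht : Filter.Tendsto (fun θ : ℝ => θ * C) (nhdsWithin 0 (Set.Ioi 0)) (nhds 0) := by
    have h1 : Filter.Tendsto (fun θ : ℝ => θ * C) (nhds 0) (nhds 0) := by
      simpa using (continuous_mul_right C).tendsto (0 : ℝ)
    exact h1.mono_left nhdsWithin_le_nhds
  refine le_of_tendsto ht ?_
  filter_upwards [Ioo_mem_nhdsGT_of_mem (by simp [he] : (0:ℝ) ∈ Set.Ico 0 e0)] with θ hθ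
  exact h θ hθ.1 hθ.2

/-- Minimization of a quadratic form on the positive part `D` of the unit sphere of
`ℝ^r`: for each nonempty `I ⊆ {1,…,r}` let `lam I` be the minimal eigenvalue of the
Gram submatrix `(B i j)_{i,j ∈ I}`, and let `𝓘` be the set of nonempty `I` whose
`lam I`-eigenspace contains a vector with strictly positive coordinates on `I`.
Then `𝓘` is nonempty and `min_{t ∈ D} q(t) = min_{I ∈ 𝓘} lam I`. -/
theorem stmt_16 (r : ℕ) (hr : 1 ≤ r)
    (B : Matrix (Fin r) (Fin r) ℝ) (hB : B.IsSymm)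
    (lam : Finset (Fin r) → ℝ)
    (hlam : ∀ I : Finset (Fin r), I.Nonempty →
      ((∃ x : Fin r → ℝ, x ≠ 0 ∧ (∀ i ∉ I, x i = 0) ∧
          ∀ i ∈ I, ∑ j ∈ I, B i j * x j = lam I * x i) ∧
        ∀ μ : ℝ, (∃ x : Fin r → ℝ, x ≠ 0 ∧ (∀ i ∉ I, x i = 0) ∧
          ∀ i ∈ I, ∑ j ∈ I, B i j * x j = μ * x i) → lam I ≤ μ)) :
    let D : Set (Fin r → ℝ) := {t | (∑ i, t i ^ 2) = 1 ∧ ∀ i, 0 ≤ t i}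
    let q : (Fin r → ℝ) → ℝ := fun t => ∑ i, ∑ j, B i j * t i * t j
    let goodI : Set (Finset (Fin r)) := {I | I.Nonempty ∧
      ∃ x : Fin r → ℝ, (∀ i ∉ I, x i = 0) ∧ (∀ i ∈ I, 0 < x i) ∧
        ∀ i ∈ I, ∑ j ∈ I, B i j * x j = lam I * x i}
    goodI.Nonempty ∧ IsLeast (q '' D) (sInf (lam '' goodI)) := by
  intro D q goodI
  -- basic algebra facts
  have hq_eq : ∀ t : Fin r → ℝ, q t = t ⬝ᵥ B *ᵥ t := by
    intro t
    simp only [q, dotProduct, Matrix.mulVec, Finset.mul_sum]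
    exact Finset.sum_congr rfl fun i _ => Finset.sum_congr rfl fun j _ => by ring
  have hsymm : ∀ x y : Fin r → ℝ, x ⬝ᵥ B *ᵥ y = y ⬝ᵥ B *ᵥ x := by
    intro x y
    rw [Matrix.dotProduct_mulVec, ← Matrix.mulVec_transpose, hB.eq, dotProduct_comm]
  have hexp : ∀ (x v : Fin r → ℝ) (θ : ℝ),
      q (x + θ • v) = q x + 2*θ*(v ⬝ᵥ B *ᵥ x) + θ^2 * q v := by
    intro x v θ
    rw [hq_eq, hq_eq, hq_eq, Matrix.mulVec_add, Matrix.mulVec_smul, dotProduct_add,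
      add_dotProduct, add_dotProduct, dotProduct_smul,
      dotProduct_smul, smul_dotProduct, smul_dotProduct,
      hsymm x v]
    simp only [smul_eq_mul]
    ring
  have hss : ∀ (x v : Fin r → ℝ) (θ : ℝ),
      (∑ j, (x + θ • v) j ^ 2) = (∑ j, x j ^ 2) + 2*θ*(x ⬝ᵥ v) + θ^2 * ∑ j, v j ^ 2 := by
    intro x v θ
    simp only [dotProduct, Pi.add_apply, Pi.smul_apply, smul_eq_mul, Finset.mul_sum,
      ← Finset.sum_add_distrib]
    exact Finset.sum_congr rfl fun j _ => by ring
  -- compactness of D and existence of a minimizer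
  have hqc : Continuous q := by
    apply continuous_finset_sum; intro i _; apply continuous_finset_sum; intro j _
    exact (continuous_const.mul (continuous_apply i)).mul (continuous_apply j)
  have hDclosed : IsClosed D := by
    have : D = {t : Fin r → ℝ | (∑ i, t i ^ 2) = 1} ∩ ⋂ i, {t | 0 ≤ t i} := by
      ext t; simp [D, Set.mem_iInter]
    rw [this]
    refine (isClosed_eq (by fun_prop) continuous_const).inter
      (isClosed_iInter fun i => isClosed_le continuous_const (continuous_apply i))
  have hDbdd : Bornology.IsBounded D := by
    refine (Metric.isBounded_iff_subset_closedBall 0).mpr ⟨1, fun t ht => ?_⟩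
    have h1 : ∀ i, t i ^ 2 ≤ 1 := by
      intro i
      calc t i ^ 2 ≤ ∑ j, t j ^ 2 :=
            Finset.single_le_sum (fun j _ => sq_nonneg (t j)) (Finset.mem_univ i)
        _ = 1 := ht.1
    simp only [Metric.mem_closedBall, dist_zero_right]
    refine pi_norm_le_iff_of_nonneg zero_le_one |>.mpr fun i => ?_
    rw [Real.norm_eq_abs, ← abs_one]
    exact abs_le_abs (by nlinarith [h1 i, ht.2 i]) (by nlinarith [h1 i, ht.2 i])
  have hDcompact : IsCompact D := Metric.isCompact_of_isClosed_isBounded hDclosed hDbdd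
  have hDne : D.Nonempty := by
    refine ⟨fun i => if i = ⟨0, hr⟩ then 1 else 0, ?_, ?_⟩
    · have : ∀ i : Fin r, (if i = ⟨0, hr⟩ then (1:ℝ) else 0) ^ 2
          = if i = ⟨0, hr⟩ then 1 else 0 := fun i => by split <;> norm_num
      simp only [this, Finset.sum_ite_eq', Finset.mem_univ, if_true]
    · intro i; dsimp only; split <;> norm_num
  obtain ⟨t₀, ht₀D, hmin⟩ := hDcompact.exists_isMinOn hDne hqc.continuousOn
  set μ := q t₀ with hμ
  -- scaling lemma
  have key : ∀ x : Fin r → ℝ, (∀ j, 0 ≤ x j) → μ * (∑ j, x j ^ 2) ≤ q x := by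
    intro x hx
    set S := ∑ j, x j ^ 2 with hS
    rcases eq_or_lt_of_le (Finset.sum_nonneg fun j _ => sq_nonneg (x j) : 0 ≤ S) with h0 | hpos
    · have hx0 : ∀ j, x j = 0 := by
        intro j
        have := (Finset.sum_eq_zero_iff_of_nonneg (fun j _ => sq_nonneg (x j))).mp h0.symm
          j (Finset.mem_univ j)
        exact pow_eq_zero_iff two_ne_zero |>.mp this
      have : q x = 0 := by simp [q, hx0]
      rw [this, hS, ← h0, mul_zero]
    · set c := Real.sqrt S with hc
      have hc0 : 0 < c := Real.sqrt_pos.mpr hpos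
      have hc2 : c ^ 2 = S := Real.sq_sqrt hpos.le
      have hyD : (c⁻¹ • x) ∈ D := by
        constructor
        · simp only [Pi.smul_apply, smul_eq_mul, mul_pow, ← Finset.mul_sum]
          rw [← hS, ← hc2]
          field_simp
        · intro i
          exact mul_nonneg (inv_nonneg.mpr hc0.le) (hx i)
      have hqy : q (c⁻¹ • x) = c⁻¹ ^ 2 * q x := by
        simp only [q, Pi.smul_apply, smul_eq_mul, Finset.mul_sum]
        exact Finset.sum_congr rfl fun i _ => Finset.sum_congr rfl fun j _ => by ring
      have := hmin hyD
      rw [Set.mem_setOf_eq, hqy] at this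
      have h2 : μ * c ^ 2 ≤ c⁻¹ ^ 2 * q x * c ^ 2 :=
        mul_le_mul_of_nonneg_right this (sq_nonneg c)
      have h3 : c⁻¹ ^ 2 * q x * c ^ 2 = q x := by field_simp
      rw [h3, hc2] at h2
      exact h2
  -- support of the minimizer
  set I : Finset (Fin r) := Finset.univ.filter (fun i => 0 < t₀ i) with hI
  have ht₀nonneg : ∀ i, 0 ≤ t₀ i := ht₀D.2
  have ht₀supp : ∀ i ∉ I, t₀ i = 0 := by
    intro i hi
    simp only [hI, Finset.mem_filter, Finset.mem_univ, true_and, not_lt] at hi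
    exact le_antisymm hi (ht₀nonneg i)
  have ht₀pos : ∀ i ∈ I, 0 < t₀ i := by
    intro i hi
    simpa only [hI, Finset.mem_filter, Finset.mem_univ, true_and] using hi
  have hIne : I.Nonempty := by
    by_contra h
    rw [Finset.not_nonempty_iff_eq_empty] at h
    have : ∀ i : Fin r, t₀ i = 0 := fun i => ht₀supp i (by simp [h])
    have : (∑ i, t₀ i ^ 2) = 0 := by simp [this]
    rw [ht₀D.1] at this
    norm_num at this
  -- perturbation stays in the cone
  have pert : ∀ v : Fin r → ℝ, (∀ j ∉ I, v j = 0) →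
      ∃ e0 > 0, ∀ θ : ℝ, |θ| < e0 → ∀ j, 0 ≤ t₀ j + θ * v j := by
    intro v hv
    refine ⟨(I.image (fun j => t₀ j / (|v j| + 1))).min' (hIne.image _), ?_, ?_⟩
    · have := (I.image (fun j => t₀ j / (|v j| + 1))).min'_mem (hIne.image _)
      rw [Finset.mem_image] at this
      obtain ⟨j, hj, hje⟩ := this
      rw [← hje]
      exact div_pos (ht₀pos j hj) (by positivity)
    · intro θ hθ j
      by_cases hjI : j ∈ I
      · have hle : (I.image (fun j => t₀ j / (|v j| + 1))).min' (hIne.image _)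
            ≤ t₀ j / (|v j| + 1) :=
          Finset.min'_le _ _ (Finset.mem_image_of_mem _ hjI)
        have h1 : |θ| * (|v j| + 1) < t₀ j := by
          have h2 : |θ| < t₀ j / (|v j| + 1) := lt_of_lt_of_le hθ hle
          have h3 : (0:ℝ) < |v j| + 1 := by positivity
          calc |θ| * (|v j| + 1) < (t₀ j / (|v j| + 1)) * (|v j| + 1) :=
                mul_lt_mul_of_pos_right h2 h3
            _ = t₀ j := by field_simp
        have h4 : |θ * v j| ≤ |θ| * (|v j| + 1) := by
          rw [abs_mul]
          exact mul_le_mul_of_nonneg_left (by linarith [abs_nonneg (v j)]) (abs_nonneg θ)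
        have h5 : -(θ * v j) ≤ |θ * v j| := neg_le_abs _
        linarith
      · rw [ht₀supp j hjI, hv j hjI, mul_zero, add_zero]
  -- first order condition: orthogonality
  have horth : ∀ v : Fin r → ℝ, (∀ j ∉ I, v j = 0) → t₀ ⬝ᵥ v = 0 →
      v ⬝ᵥ B *ᵥ t₀ = 0 := by
    intro v hv hvt
    obtain ⟨e0, he0, hcone⟩ := pert v hv
    set a := v ⬝ᵥ B *ᵥ t₀ with ha
    set C := μ * (∑ j, v j ^ 2) - q v with hC
    have main : ∀ θ : ℝ, |θ| < e0 → θ * (θ * C) ≤ θ * (2 * a) := by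
      intro θ hθ
      have hmem : ∀ j, 0 ≤ (t₀ + θ • v) j := by
        intro j; simpa using hcone θ hθ j
      have h1 := key (t₀ + θ • v) hmem
      rw [hexp, hss] at h1
      rw [ht₀D.1, hvt] at h1
      rw [hC]
      nlinarith [h1]
    have h1 : ∀ θ : ℝ, 0 < θ → θ < e0 → θ * C ≤ 2 * a := by
      intro θ hθ0 hθe
      have := main θ (by rw [abs_of_pos hθ0]; exact hθe)
      exact (mul_le_mul_iff_right₀ hθ0).mp this
    have h2 : ∀ θ : ℝ, 0 < θ → θ < e0 → θ * C ≤ -(2 * a) := by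
      intro θ hθ0 hθe
      have := main (-θ) (by rw [abs_neg, abs_of_pos hθ0]; exact hθe)
      have h3 : θ * (θ * C) ≤ θ * (-(2*a)) := by nlinarith [this]
      exact (mul_le_mul_iff_right₀ hθ0).mp h3
    have ha1 : 0 ≤ 2 * a := aux_lim_16 _ _ _ he0 h1
    have ha2 : 0 ≤ -(2 * a) := aux_lim_16 _ _ _ he0 h2
    linarith
  -- eigen equation for t₀
  have heig : ∀ i ∈ I, (B *ᵥ t₀) i = μ * t₀ i := by
    intro i hiI
    have hik : ∀ k ∈ I, (B *ᵥ t₀) i * t₀ k = (B *ᵥ t₀) k * t₀ i := by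
      intro k hkI
      set v : Fin r → ℝ := fun j => (if j = i then t₀ k else 0) + (if j = k then -(t₀ i) else 0)
        with hvdef
      have hdot : ∀ w : Fin r → ℝ, w ⬝ᵥ v = w i * t₀ k - w k * t₀ i := by
        intro w
        simp only [dotProduct, hvdef, mul_add, Finset.sum_add_distrib, mul_ite,
          mul_zero, mul_neg, Finset.sum_ite_eq', Finset.mem_univ, if_true, Finset.sum_neg_distrib]
        ring
      have hsupp : ∀ j ∉ I, v j = 0 := by
        intro j hj
        have h1 : j ≠ i := fun h => hj (h ▸ hiI)
        have h2 : j ≠ k := fun h => hj (h ▸ hkI)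
        simp [hvdef, h1, h2]
      have hvt : t₀ ⬝ᵥ v = 0 := by rw [hdot]; ring
      have := horth v hsupp hvt
      rw [dotProduct_comm, hdot] at this
      linarith
    have hsum : ∑ k ∈ I, t₀ k * ((B *ᵥ t₀) i * t₀ k) = ∑ k ∈ I, t₀ k * ((B *ᵥ t₀) k * t₀ i) :=
      Finset.sum_congr rfl fun k hk => by rw [hik k hk]
    have hsq : ∑ k ∈ I, t₀ k ^ 2 = 1 := by
      rw [← ht₀D.1]
      exact Finset.sum_subset (Finset.subset_univ I)
        (fun k _ hk => by rw [ht₀supp k hk]; ring)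
    have hqsum : ∑ k ∈ I, t₀ k * (B *ᵥ t₀) k = μ := by
      rw [hμ, hq_eq]
      simp only [dotProduct]
      exact Finset.sum_subset (Finset.subset_univ I)
        (fun k _ hk => by rw [ht₀supp k hk]; ring)
    have e1 : ∑ k ∈ I, t₀ k * ((B *ᵥ t₀) i * t₀ k) = (B *ᵥ t₀) i * ∑ k ∈ I, t₀ k ^ 2 := by
      rw [Finset.mul_sum]; exact Finset.sum_congr rfl fun k _ => by ring
    have e2 : ∑ k ∈ I, t₀ k * ((B *ᵥ t₀) k * t₀ i) = (∑ k ∈ I, t₀ k * (B *ᵥ t₀) k) * t₀ i := by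
      rw [Finset.sum_mul]; exact Finset.sum_congr rfl fun k _ => by ring
    rw [e1, e2, hsq, hqsum, mul_one] at hsum
    linarith [hsum]
  have heig' : ∀ i ∈ I, ∑ j ∈ I, B i j * t₀ j = μ * t₀ i := by
    intro i hiI
    have : ∑ j ∈ I, B i j * t₀ j = (B *ᵥ t₀) i :=
      Finset.sum_subset (Finset.subset_univ I)
        (fun j _ hj => by rw [ht₀supp j hj]; ring)
    rw [this]
    exact heig i hiI
  have ht₀ne : t₀ ≠ 0 := by
    intro h
    have := ht₀D.1
    rw [h] at this
    simp at this
  -- lam I ≤ μ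
  obtain ⟨⟨x, hx0, hxsupp, hxeig⟩, hmin'⟩ := hlam I hIne
  have hlamle : lam I ≤ μ := hmin' μ ⟨t₀, ht₀ne, ht₀supp, heig'⟩
  -- μ ≤ lam I via perturbation along x
  have hqx_of_eig : ∀ (J : Finset (Fin r)) (y : Fin r → ℝ) (ν : ℝ),
      (∀ i ∉ J, y i = 0) → (∀ i ∈ J, ∑ j ∈ J, B i j * y j = ν * y i) →
      q y = ν * ∑ j, y j ^ 2 := by
    intro J y ν hys hye
    have h1 : q y = ∑ i ∈ J, ∑ j ∈ J, B i j * y i * y j := by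
      simp only [q]
      rw [← Finset.sum_subset (Finset.subset_univ J)
        (fun i _ hi => Finset.sum_eq_zero fun j _ => by rw [hys i hi]; ring)]
      refine Finset.sum_congr rfl fun i _ => ?_
      rw [← Finset.sum_subset (Finset.subset_univ J)
        (fun j _ hj => by rw [hys j hj]; ring)]
    have h2 : ∑ j, y j ^ 2 = ∑ j ∈ J, y j ^ 2 :=
      (Finset.sum_subset (Finset.subset_univ J)
        (fun j _ hj => by rw [hys j hj]; ring)).symm
    rw [h1, h2, Finset.mul_sum]
    refine Finset.sum_congr rfl fun i hi => ?_
    have : ∑ j ∈ J, B i j * y i * y j = y i * ∑ j ∈ J, B i j * y j := by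
      rw [Finset.mul_sum]; exact Finset.sum_congr rfl fun j _ => by ring
    rw [this, hye i hi]; ring
  have hxBt : x ⬝ᵥ B *ᵥ t₀ = μ * (x ⬝ᵥ t₀) := by
    simp only [dotProduct]
    rw [← Finset.sum_subset (Finset.subset_univ I)
      (fun j _ hj => by rw [hxsupp j hj]; ring),
      ← Finset.sum_subset (Finset.subset_univ I)
      (fun j _ hj => by rw [hxsupp j hj]; ring), Finset.mul_sum]
    refine Finset.sum_congr rfl fun j hj => ?_
    rw [heig j hj]; ring
  have hSx : 0 < ∑ j, x j ^ 2 := by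
    rcases Function.ne_iff.mp hx0 with ⟨j, hj⟩
    have hj' : x j ≠ 0 := by simpa using hj
    have h1 : 0 < x j ^ 2 := by
      calc (0:ℝ) < |x j| ^ 2 := pow_pos (abs_pos.mpr hj') 2
        _ = x j ^ 2 := sq_abs _
    exact lt_of_lt_of_le h1 (Finset.single_le_sum (fun k _ => sq_nonneg (x k))
      (Finset.mem_univ j))
  have hmule : μ ≤ lam I := by
    obtain ⟨e0, he0, hcone⟩ := pert x hxsupp
    set θ := e0 / 2 with hθ
    have hθ0 : 0 < θ := by positivity
    have hθe : |θ| < e0 := by rw [abs_of_pos hθ0]; linarith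
    have hmem : ∀ j, 0 ≤ (t₀ + θ • x) j := by
      intro j; simpa using hcone θ hθe j
    have h1 := key (t₀ + θ • x) hmem
    rw [hexp, hss, ht₀D.1, hxBt, dotProduct_comm t₀ x,
      hqx_of_eig I x (lam I) hxsupp hxeig] at h1
    nlinarith [h1, mul_pos (mul_pos hθ0 hθ0) hSx]
  have hlameq : lam I = μ := le_antisymm hlamle hmule
  -- I is good
  have hIgood : I ∈ goodI := by
    refine ⟨hIne, t₀, ht₀supp, ht₀pos, ?_⟩
    rw [hlameq]
    exact heig'
  have hne : (lam '' goodI).Nonempty := ⟨lam I, I, hIgood, rfl⟩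
  have hlb : ∀ y ∈ lam '' goodI, μ ≤ y := by
    rintro y ⟨J, ⟨hJne, z, hzs, hzpos, hzeig⟩, rfl⟩
    have hznn : ∀ j, 0 ≤ z j := by
      intro j
      by_cases hj : j ∈ J
      · exact (hzpos j hj).le
      · rw [hzs j hj]
    have h1 := key z hznn
    rw [hqx_of_eig J z (lam J) hzs hzeig] at h1
    have hSz : 0 < ∑ j, z j ^ 2 := by
      obtain ⟨j, hj⟩ := hJne
      have : 0 < z j ^ 2 := pow_pos (hzpos j hj) 2
      exact lt_of_lt_of_le this (Finset.single_le_sum (fun k _ => sq_nonneg (z k))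
        (Finset.mem_univ j))
    nlinarith [h1, hSz]
  have hsinf : sInf (lam '' goodI) = μ := by
    refine le_antisymm ?_ (le_csInf hne hlb)
    exact csInf_le ⟨μ, hlb⟩ ⟨I, hIgood, hlameq⟩
  refine ⟨⟨I, hIgood⟩, ?_⟩
  rw [hsinf]
  exact ⟨⟨t₀, ht₀D, rfl⟩, by rintro y ⟨t, ht, rfl⟩; exact hmin ht⟩
end

section
/- Let r ≥ 1, β a symmetric bilinear form on ℝ^r, D the positive part of the unit sphere, and i ≠ j indices such that for all real s_i, s_j and all fixed (t_l)_{l≠i,j}, β evaluated at s_i e_i + s_j e_j + ∑_{l≠i,j} t_l e_l equals −C·s_i s_j + φ(s_i + s_j) for some constant C > 0 and some function φ of s_i + s_j. If t ∈ D achieves the minimum of β(x,x) over the convex set {x ∈ ℝ^r | x_l ≥ 0, |x| ≤ 1} and this minimum is negative, then t_i = t_j. -/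
/-- Let `q` be the quadratic form of the symmetric matrix `B` on `ℝ^r`, and suppose
that for indices `i ≠ j` the form decomposes, for every fixed choice of the other
coordinates, as `q = −C sᵢ sⱼ + φ(sᵢ + sⱼ)` in the coordinates `sᵢ, sⱼ`, with
`C > 0`.  If `t` lies on the positive part of the unit sphere and achieves a
negative minimum of `q` over `{x | x_l ≥ 0, |x| ≤ 1}`, then `t i = t j`. -/
theorem stmt_17 (r : ℕ) (hr : 1 ≤ r)
    (B : Matrix (Fin r) (Fin r) ℝ) (hB : B.IsSymm)
    (i j : Fin r) (hij : i ≠ j) (C : ℝ) (hC : 0 < C)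
    (q : (Fin r → ℝ) → ℝ) (hq : ∀ t, q t = ∑ a, ∑ b, B a b * t a * t b)
    (hsplit : ∀ t : Fin r → ℝ, ∃ φ : ℝ → ℝ, ∀ si sj : ℝ,
      q (Function.update (Function.update t i si) j sj) = -C * si * sj + φ (si + sj))
    (t : Fin r → ℝ) (htsphere : (∑ l, t l ^ 2) = 1) (htpos : ∀ l, 0 ≤ t l)
    (hmin : ∀ x : Fin r → ℝ, (∀ l, 0 ≤ x l) → (∑ l, x l ^ 2) ≤ 1 → q t ≤ q x)
    (hneg : q t < 0) :
    t i = t j := by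
  obtain ⟨φ, hφ⟩ := hsplit t
  set s : ℝ := (t i + t j) / 2 with hs
  set x : Fin r → ℝ := Function.update (Function.update t i s) j s with hx
  have hxt : q t = -C * t i * t j + φ (t i + t j) := by
    have := hφ (t i) (t j)
    rwa [Function.update_eq_self, Function.update_eq_self] at this
  have hxq : q x = -C * s * s + φ (t i + t j) := by
    have := hφ s s
    rw [hx, this]
    congr 1
    rw [hs]; ring
  -- nonnegativity of x
  have hxpos : ∀ l, 0 ≤ x l := by
    intro l
    have hs0 : 0 ≤ s := by
      have := htpos i; have := htpos j; rw [hs]; linarith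
    rw [hx]
    rcases eq_or_ne l j with rfl | hlj
    · simp [hs0]
    · rw [Function.update_of_ne hlj]
      rcases eq_or_ne l i with rfl | hli
      · simp [hs0]
      · rw [Function.update_of_ne hli]; exact htpos l
  -- sum of squares
  have hsq : (fun l => x l ^ 2) =
      Function.update (Function.update (fun l => t l ^ 2) i (s ^ 2)) j (s ^ 2) := by
    funext l
    rw [hx]
    rcases eq_or_ne l j with rfl | hlj
    · simp
    · rw [Function.update_of_ne hlj, Function.update_of_ne hlj]
      rcases eq_or_ne l i with rfl | hli
      · simp
      · rw [Function.update_of_ne hli, Function.update_of_ne hli]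
  have hi_mem : i ∈ (Finset.univ.erase j : Finset (Fin r)) :=
    Finset.mem_erase.mpr ⟨hij, Finset.mem_univ i⟩
  have hsumx : ∑ l, x l ^ 2 = s ^ 2 + s ^ 2 + ∑ l ∈ (Finset.univ.erase j).erase i, t l ^ 2 := by
    have e1 : ∑ l, x l ^ 2 =
        ∑ l, Function.update (Function.update (fun l => t l ^ 2) i (s ^ 2)) j (s ^ 2) l := by
      rw [← hsq]
    rw [e1, Finset.sum_update_of_mem (Finset.mem_univ j), ← Finset.erase_eq,
      Finset.sum_update_of_mem hi_mem, ← Finset.erase_eq]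
    ring
  have hsumt : ∑ l, t l ^ 2 = t j ^ 2 + t i ^ 2 + ∑ l ∈ (Finset.univ.erase j).erase i, t l ^ 2 := by
    rw [← Finset.add_sum_erase _ _ (Finset.mem_univ j), ← Finset.add_sum_erase _ _ hi_mem]
    ring
  have hxle : ∑ l, x l ^ 2 ≤ 1 := by
    rw [hsumx]
    have : s ^ 2 + s ^ 2 ≤ t j ^ 2 + t i ^ 2 := by rw [hs]; nlinarith [sq_nonneg (t i - t j)]
    linarith [hsumt ▸ htsphere]
  have hle := hmin x hxpos hxle
  rw [hxt, hxq] at hle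
  have h1 : s * s ≤ t i * t j := by nlinarith
  rw [hs] at h1
  nlinarith [sq_nonneg (t i - t j)]
end
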